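/- For every σ ∈ 𝔖_n, the right ideal p_σ · H𝔖_n is isomorphic, as a right H𝔖_n-module, to P_D with D = Des(σ⁻¹). -/

import Mathlib

open scoped Classical

set_option maxHeartbeats 1000000
set_option synthInstance.maxHeartbeats 400000

noncomputable section

/-- The symmetric group on `{1, …, n}`, 0-indexed as permutations of `Fin n`
(so positions/descents are indexed by `i ∈ {0, …, n-2}` instead of `{1, …, n-1}`). -/
abbrev PermN (n : ℕ) := Equiv.Perm (Fin n)

/-- The vector space `ℂ𝔖ₙ` with basis the symmetric group. -/
abbrev CS (n : ℕ) := Equiv.Perm (Fin n) →₀ ℂ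

/-- The elementary transposition `sᵢ` exchanging `i` and `i+1` (0-indexed). -/
def swapAt (n i : ℕ) (h : i + 1 < n) : PermN n :=
  Equiv.swap ⟨i, Nat.lt_of_succ_lt h⟩ ⟨i + 1, h⟩

/-- The operator `σᵢ` on `ℂ𝔖ₙ`: right multiplication by `sᵢ` (action on positions),
`μ ↦ μ sᵢ`. -/
def sigmaOp (n i : ℕ) : Module.End ℂ (CS n) :=
  if h : i + 1 < n then Finsupp.lmapDomain ℂ ℂ (fun μ => μ * swapAt n i h) else 1

/-- The elementary decreasing sorting operator `πᵢ` on `ℂ𝔖ₙ`: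
`μ ↦ μ` if `μᵢ > μᵢ₊₁` and `μ ↦ μ sᵢ` otherwise. -/
def piOp (n i : ℕ) : Module.End ℂ (CS n) :=
  if h : i + 1 < n then
    Finsupp.lmapDomain ℂ ℂ (fun μ : PermN n =>
      if μ ⟨i + 1, h⟩ < μ ⟨i, Nat.lt_of_succ_lt h⟩ then μ else μ * swapAt n i h)
  else 1

/-- The operator `σ̄ᵢ` on `ℂ𝔖ₙ`: left multiplication by `sᵢ` (action on values),
`μ ↦ sᵢ μ`. -/
def sigmaBarOp (n i : ℕ) : Module.End ℂ (CS n) :=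
  if h : i + 1 < n then Finsupp.lmapDomain ℂ ℂ (fun μ => swapAt n i h * μ) else 1

/-- The operator `σ_σ` of right multiplication by a permutation `σ`
(equal to the product of the `σᵢ` along any reduced word for `σ`). -/
def rightMulOp (n : ℕ) (σ : PermN n) : Module.End ℂ (CS n) :=
  Finsupp.lmapDomain ℂ ℂ (fun μ => μ * σ)

/-- The algebra `H𝔖ₙ`: the subalgebra of `End(ℂ𝔖ₙ)` generated by the operators
`σ₁, …, σ_{n-1}, π₁, …, π_{n-1}`.

Note on conventions: the paper composes operators left to right, `v·(fg) = (v·f)·g`,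
while multiplication in `Module.End` is `(f * g) v = f (g v)`.  Hence the paper's
product `f·g` is `g * f` here.  This does not affect the generated subalgebra. -/
def HS (n : ℕ) : Subalgebra ℂ (Module.End ℂ (CS n)) :=
  Algebra.adjoin ℂ
    ({f | ∃ i, ∃ _ : i + 1 < n, f = sigmaOp n i} ∪ {f | ∃ i, ∃ _ : i + 1 < n, f = piOp n i})

/-- The descent set `Des(μ) = {i : μᵢ > μᵢ₊₁}` (0-indexed positions). -/
def Des (n : ℕ) (μ : PermN n) : Set ℕ :=
  {i | ∃ h : i + 1 < n, μ ⟨i + 1, h⟩ < μ ⟨i, Nat.lt_of_succ_lt h⟩}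

/-- The module `P_D`: the vectors of `ℂ𝔖ₙ` that are left `i`-antisymmetric
for every `i ∉ D` (0-indexed, `i+1 < n`). -/
def PD (n : ℕ) (D : Set ℕ) : Submodule ℂ (CS n) :=
  ⨅ i : {i : ℕ // i + 1 < n ∧ i ∉ D}, LinearMap.ker (1 + sigmaBarOp n i.1)

/-- The Young subgroup `𝔖_⟨D⟩` generated by the `sᵢ` for `i ∉ D`. -/
def Young (n : ℕ) (D : Set ℕ) : Subgroup (PermN n) :=
  Subgroup.closure {g | ∃ i, ∃ h : i + 1 < n, i ∉ D ∧ g = swapAt n i h}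

/-- The vector `v_D = ∑_{ν ∈ 𝔖_⟨D⟩} (-1)^{ℓ(ν)} ν` (the sign `(-1)^{ℓ(ν)}` is the
signature of `ν`). -/
def vD (n : ℕ) (D : Set ℕ) : CS n :=
  ∑ᶠ ν ∈ (Young n D : Set (PermN n)),
    ((Equiv.Perm.sign ν : ℤ) : ℂ) • Finsupp.single ν 1

/-- The vector `v_σ := v_{Des(σ⁻¹)} · σ_σ`. -/
def vPerm (n : ℕ) (σ : PermN n) : CS n :=
  rightMulOp n σ (vD n (Des n σ⁻¹))

-- Helper instances (present in Mathlib, but provided here explicitly to avoid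
-- very deep instance searches on `Module.End ℂ (CS n)`).
noncomputable instance (priority := 10000) endSubACG (n : ℕ)
    (N : Submodule ℂ (Module.End ℂ (CS n))) : AddCommGroup ↥N :=
  @Submodule.addCommGroup ℂ (Module.End ℂ (CS n)) _ _ _ N

noncomputable instance (priority := 10000) subalgRing (n : ℕ)
    (S : Subalgebra ℂ (Module.End ℂ (CS n))) : Ring ↥S :=
  @Subalgebra.toRing ℂ (Module.End ℂ (CS n)) _ _ _ S

noncomputable instance (priority := 10000) subalgACG (n : ℕ)
    (S : Subalgebra ℂ (Module.End ℂ (CS n))) : AddCommGroup ↥S :=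
  (subalgRing n S).toAddCommGroup

noncomputable instance (priority := 10000) subalgMod (n : ℕ)
    (S : Subalgebra ℂ (Module.End ℂ (CS n))) : Module ℂ ↥S :=
  (Subalgebra.toSubmodule S).module'

/-- The right ideal `p · H𝔖ₙ` (in the paper's left-to-right convention, the set of
`p · h = h ∘ p` for `h ∈ H𝔖ₙ`), as a subspace of `End(ℂ𝔖ₙ)`. -/
def pIdeal (n : ℕ) (q : Module.End ℂ (CS n)) : Submodule ℂ (Module.End ℂ (CS n)) :=
  Submodule.map (LinearMap.mulRight ℂ q) (Subalgebra.toSubmodule (HS n))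

/-!
Evaluation at `v_σ` identifies the right ideal `p_σ · H𝔖ₙ` with the cyclic module
`v_σ · H𝔖ₙ`: the `v_τ` span `ℂ𝔖ₙ`, so `p_σ` has image `ℂ v_σ` and fixes `v_σ`, hence
`p_σ · h` is determined by `v_σ · h`. It remains to see that `v_σ · H𝔖ₙ = P_D` for
`D = Des(σ⁻¹)`. The vector `v_σ` is the antisymmetrizer of `𝔖_⟨D⟩` applied to `σ`, so it lies
in `P_D`; `P_D` is `H𝔖ₙ`-stable because `σᵢ` commutes with `σ̄ⱼ` and
`(1 + σ̄ⱼ) πᵢ (1 - σ̄ⱼ) = 0`; and every `w ∈ P_D` is reached, since right multiplications lie in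
`H𝔖ₙ` and the antisymmetrizer acts on `P_D` as multiplication by `|𝔖_⟨D⟩|`.

The `v_τ` span by triangularity: `v_μ = μ + ∑_{ν ≠ 1} ± νμ`, and `νμ` has strictly more
inversions than `μ`: `μ⁻¹` increases on each interval not cut by a descent `j ∈ D`, which
makes `μ` the shortest element of its coset `𝔖_⟨D⟩ μ`.
-/

theorem exists_linearEquiv_map_mulRight {R V : Type*} [CommRing R] [AddCommGroup V] [Module R V]
    (S : Subalgebra R (Module.End R V)) (M : Submodule R V) {q : Module.End R V} {v : V}
    (hqv : q v = v) (hq : ∀ x, q x ∈ R ∙ v)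
    (hSM : ∀ h ∈ S, h v ∈ M) (hMS : ∀ w ∈ M, ∃ h ∈ S, h v = w) :
    ∃ e : Submodule.map (LinearMap.mulRight R q) (Subalgebra.toSubmodule S) ≃ₗ[R] M,
      ∀ f, (e f : V) = (f : Module.End R V) v := by
  have hmem : ∀ f : Submodule.map (LinearMap.mulRight R q) (Subalgebra.toSubmodule S),
      (f : Module.End R V) v ∈ M := by
    rintro ⟨_, h, hh, rfl⟩
    simpa [hqv] using hSM h hh
  let e := (LinearMap.applyₗ v ∘ₗ Submodule.subtype _).codRestrict M hmem
  have he : Function.Bijective e := by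
    refine ⟨(injective_iff_map_eq_zero e).mpr ?_, ?_⟩
    · rintro ⟨_, h, -, rfl⟩
      intro hf
      have hhv : h v = 0 := by
        rw [← hqv]
        exact congrArg Subtype.val hf
      ext x
      obtain ⟨c, hc⟩ := Submodule.mem_span_singleton.mp (hq x)
      simp [← hc, hhv]
    · rintro ⟨w, hw⟩
      obtain ⟨h, hh, rfl⟩ := hMS w hw
      exact ⟨⟨h * q, h, hh, rfl⟩, Subtype.ext (congrArg h hqv)⟩
  exact ⟨LinearEquiv.ofBijective e he, fun f => rfl⟩

theorem mapsTo_of_mem_adjoin {R V : Type*} [CommSemiring R] [AddCommMonoid V] [Module R V]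
    {s : Set (Module.End R V)} (M : Submodule R V) (hs : ∀ f ∈ s, Set.MapsTo f M M)
    {h : Module.End R V} (hh : h ∈ Algebra.adjoin R s) : Set.MapsTo h M M := by
  induction hh using Algebra.adjoin_induction with
  | mem f hf => exact hs f hf
  | algebraMap r => exact fun w hw => M.smul_mem r hw
  | add f g _ _ hf hg => exact fun w hw => M.add_mem (hf hw) (hg hw)
  | mul f g _ _ hf hg => exact hf.comp hg

section Operators

variable {n : ℕ}

def leftMulOp (n : ℕ) (ν : PermN n) : Module.End ℂ (CS n) :=
  Finsupp.lmapDomain ℂ ℂ (fun μ => ν * μ)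

@[simp]
theorem leftMulOp_single (ν μ : PermN n) (c : ℂ) :
    leftMulOp n ν (Finsupp.single μ c) = Finsupp.single (ν * μ) c := by
  simp [leftMulOp]

@[simp]
theorem rightMulOp_single (ρ μ : PermN n) (c : ℂ) :
    rightMulOp n ρ (Finsupp.single μ c) = Finsupp.single (μ * ρ) c := by
  simp [rightMulOp]

theorem swapAt_mul_self {i : ℕ} (hi : i + 1 < n) : swapAt n i hi * swapAt n i hi = 1 :=
  Equiv.swap_mul_self _ _

theorem leftMulOp_mul (ν ν' : PermN n) :
    leftMulOp n (ν * ν') = leftMulOp n ν * leftMulOp n ν' :=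
  Finsupp.lhom_ext fun μ c => by simp [mul_assoc]

theorem rightMulOp_mul (ρ ρ' : PermN n) :
    rightMulOp n (ρ * ρ') = rightMulOp n ρ' * rightMulOp n ρ :=
  Finsupp.lhom_ext fun μ c => by simp [mul_assoc]

@[simp]
theorem leftMulOp_one : leftMulOp n 1 = 1 :=
  Finsupp.lhom_ext fun μ c => by simp

@[simp]
theorem rightMulOp_one : rightMulOp n 1 = 1 :=
  Finsupp.lhom_ext fun μ c => by simp

@[simp]
theorem leftMulOp_swapAt_leftMulOp_swapAt {i : ℕ} (hi : i + 1 < n) (x : CS n) :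
    leftMulOp n (swapAt n i hi) (leftMulOp n (swapAt n i hi) x) = x := by
  rw [← Module.End.mul_apply, ← leftMulOp_mul, swapAt_mul_self, leftMulOp_one, Module.End.one_apply]

theorem leftMulOp_commute_rightMulOp (ν ρ : PermN n) :
    Commute (leftMulOp n ν) (rightMulOp n ρ) :=
  Finsupp.lhom_ext fun μ c => by simp [mul_assoc]

theorem sigmaBarOp_eq_leftMulOp {i : ℕ} (hi : i + 1 < n) :
    sigmaBarOp n i = leftMulOp n (swapAt n i hi) := by
  rw [sigmaBarOp, dif_pos hi, leftMulOp]

theorem sigmaOp_eq_rightMulOp {i : ℕ} (hi : i + 1 < n) :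
    sigmaOp n i = rightMulOp n (swapAt n i hi) := by
  rw [sigmaOp, dif_pos hi, rightMulOp]

theorem sign_swapAt {i : ℕ} (hi : i + 1 < n) : Equiv.Perm.sign (swapAt n i hi) = -1 :=
  Equiv.Perm.sign_swap (by simp [Fin.ext_iff])

theorem rightMulOp_mem_HS (ρ : PermN n) : rightMulOp n ρ ∈ HS n := by
  cases n with
  | zero => simp [Subsingleton.elim ρ 1, one_mem]
  | succ m =>
    have hρ : ρ ∈ Submonoid.closure (Set.range fun i : Fin m ↦ Equiv.swap i.castSucc i.succ) := by
      simp [Equiv.Perm.mclosure_swap_castSucc_succ]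
    induction hρ using Submonoid.closure_induction with
    | one => simp [one_mem]
    | mul x y _ _ hx hy => simpa [rightMulOp_mul] using mul_mem hy hx
    | mem g hg =>
      obtain ⟨i, rfl⟩ := hg
      have hi : (i : ℕ) + 1 < m + 1 := by omega
      change rightMulOp (m + 1) (swapAt (m + 1) i hi) ∈ _
      rw [← sigmaOp_eq_rightMulOp hi]
      exact Algebra.subset_adjoin (Or.inl ⟨i, hi, rfl⟩)

end Operators

section Stability

variable {n : ℕ}

theorem mem_Des_iff {μ : PermN n} {i : ℕ} (hi : i + 1 < n) :
    i ∈ Des n μ ↔ μ ⟨i + 1, hi⟩ < μ ⟨i, Nat.lt_of_succ_lt hi⟩ :=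
  ⟨fun ⟨_, h⟩ => h, fun h => ⟨hi, h⟩⟩

theorem piOp_single {i : ℕ} (hi : i + 1 < n) (μ : PermN n) (c : ℂ) :
    piOp n i (Finsupp.single μ c) =
      Finsupp.single (if i ∈ Des n μ then μ else μ * swapAt n i hi) c := by
  simp [piOp, dif_pos hi, mem_Des_iff hi]

theorem mem_Des_mul_swapAt_iff {μ : PermN n} {i : ℕ} (hi : i + 1 < n) :
    i ∈ Des n (μ * swapAt n i hi) ↔ i ∉ Des n μ := by
  have hne : μ ⟨i + 1, hi⟩ ≠ μ ⟨i, Nat.lt_of_succ_lt hi⟩ := by simp [Fin.ext_iff]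
  simp only [mem_Des_iff hi, Equiv.Perm.mul_apply, swapAt, Equiv.swap_apply_left,
    Equiv.swap_apply_right, not_lt]
  exact ⟨le_of_lt, fun h => lt_of_le_of_ne h hne.symm⟩

theorem piOp_single_mul_swapAt {i : ℕ} (hi : i + 1 < n) (μ : PermN n) (c : ℂ) :
    piOp n i (Finsupp.single (μ * swapAt n i hi) c) = piOp n i (Finsupp.single μ c) := by
  simp only [piOp_single hi, mem_Des_mul_swapAt_iff hi]
  split_ifs <;> simp [mul_assoc, swapAt_mul_self]

theorem swapAt_lt_swapAt_iff {j : ℕ} (hj : j + 1 < n) {a b : Fin n}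
    (hab : Equiv.swap a b ≠ swapAt n j hj) :
    swapAt n j hj a < swapAt n j hj b ↔ a < b := by
  have : (a = ⟨j, Nat.lt_of_succ_lt hj⟩ ∧ b = ⟨j + 1, hj⟩) ∨
      (b = ⟨j, Nat.lt_of_succ_lt hj⟩ ∧ a = ⟨j + 1, hj⟩) ∨
      (swapAt n j hj a < swapAt n j hj b ↔ a < b) := by
    simp only [swapAt, Equiv.swap_apply_def, Fin.ext_iff, Fin.lt_def]
    split_ifs <;> simp <;> omega
  rcases this with ⟨rfl, rfl⟩ | ⟨rfl, rfl⟩ | h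
  · exact absurd rfl hab
  · exact absurd (Equiv.swap_comm _ _) hab
  · exact h

theorem mem_Des_swapAt_mul_iff {μ : PermN n} {i j : ℕ} (hi : i + 1 < n) (hj : j + 1 < n)
    (hμ : swapAt n j hj * μ ≠ μ * swapAt n i hi) :
    i ∈ Des n (swapAt n j hj * μ) ↔ i ∈ Des n μ := by
  have hswap : Equiv.swap (μ ⟨i + 1, hi⟩) (μ ⟨i, Nat.lt_of_succ_lt hi⟩) ≠ swapAt n j hj := by
    rintro h
    apply hμ
    rw [← h, Equiv.swap_comm, Equiv.swap_apply_apply, inv_mul_cancel_right]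
    rfl
  simp only [mem_Des_iff hi, Equiv.Perm.mul_apply, swapAt_lt_swapAt_iff hj hswap]

theorem one_add_leftMulOp_mul_piOp_mul_one_sub_leftMulOp {i j : ℕ} (hi : i + 1 < n)
    (hj : j + 1 < n) :
    (1 + leftMulOp n (swapAt n j hj)) * piOp n i * (1 - leftMulOp n (swapAt n j hj)) = 0 := by
  have hT : (1 + leftMulOp n (swapAt n j hj)) * (1 - leftMulOp n (swapAt n j hj)) = 0 :=
    LinearMap.ext fun x => by simp
  refine Finsupp.lhom_ext fun μ c => ?_
  -- Either `sⱼ` exchanges the values `μᵢ, μᵢ₊₁`, so that `(1 - σ̄ⱼ) μ = μ - μ sᵢ` is killed by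
  -- `πᵢ`, or it does not reverse them and `πᵢ` commutes with `σ̄ⱼ` on `μ`.
  by_cases hμ : swapAt n j hj * μ = μ * swapAt n i hi
  · simp [hμ, piOp_single_mul_swapAt]
  · have hcomm : piOp n i ((1 - leftMulOp n (swapAt n j hj)) (Finsupp.single μ c)) =
        (1 - leftMulOp n (swapAt n j hj)) (piOp n i (Finsupp.single μ c)) := by
      by_cases hd : i ∈ Des n μ <;>
        simp [piOp_single hi, mem_Des_swapAt_mul_iff hi hj hμ, hd, mul_assoc]
    rw [Module.End.mul_apply, Module.End.mul_apply, hcomm, ← Module.End.mul_apply, hT]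
    rfl

theorem leftMulOp_piOp_eq_neg {i j : ℕ} (hj : j + 1 < n) {w : CS n}
    (hw : leftMulOp n (swapAt n j hj) w = -w) :
    leftMulOp n (swapAt n j hj) (piOp n i w) = -piOp n i w := by
  by_cases hi : i + 1 < n
  · have hw' : w = (1 - leftMulOp n (swapAt n j hj)) ((2⁻¹ : ℂ) • w) := by
      rw [map_smul, LinearMap.sub_apply, hw, Module.End.one_apply, sub_neg_eq_add, ← two_smul ℂ w,
        smul_smul, inv_mul_cancel₀ two_ne_zero, one_smul]
    have h₀ := LinearMap.congr_fun (one_add_leftMulOp_mul_piOp_mul_one_sub_leftMulOp hi hj)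
      ((2⁻¹ : ℂ) • w)
    rw [Module.End.mul_apply, Module.End.mul_apply, ← hw', LinearMap.add_apply,
      Module.End.one_apply] at h₀
    exact eq_neg_of_add_eq_zero_right h₀
  · simpa [piOp, dif_neg hi] using hw

theorem leftMulOp_sigmaOp_eq_neg {i j : ℕ} (hj : j + 1 < n) {w : CS n}
    (hw : leftMulOp n (swapAt n j hj) w = -w) :
    leftMulOp n (swapAt n j hj) (sigmaOp n i w) = -sigmaOp n i w := by
  by_cases hi : i + 1 < n
  · rw [sigmaOp_eq_rightMulOp hi, ← Module.End.mul_apply,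
      (leftMulOp_commute_rightMulOp _ _).eq, Module.End.mul_apply, hw, map_neg]
  · simpa [sigmaOp, dif_neg hi] using hw

theorem mem_PD_iff {D : Set ℕ} {w : CS n} :
    w ∈ PD n D ↔ ∀ i (hi : i + 1 < n), i ∉ D → leftMulOp n (swapAt n i hi) w = -w := by
  simp only [PD, Submodule.mem_iInf, LinearMap.mem_ker, LinearMap.add_apply, Module.End.one_apply,
    Subtype.forall, and_imp]
  refine forall_congr' fun i => forall_congr' fun hi => forall_congr' fun _ => ?_
  rw [sigmaBarOp_eq_leftMulOp hi, add_eq_zero_iff_eq_neg']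

theorem apply_mem_PD_of_mem_HS {D : Set ℕ} {h : Module.End ℂ (CS n)} (hh : h ∈ HS n)
    {w : CS n} (hw : w ∈ PD n D) : h w ∈ PD n D := by
  refine mapsTo_of_mem_adjoin (PD n D) ?_ hh hw
  rintro g (⟨k, -, rfl⟩ | ⟨k, -, rfl⟩) w hw <;>
    rw [SetLike.mem_coe, mem_PD_iff] at hw ⊢ <;> intro i hi hiD
  · exact leftMulOp_sigmaOp_eq_neg hi (hw i hi hiD)
  · exact leftMulOp_piOp_eq_neg hi (hw i hi hiD)

end Stability

section Antisymmetrizer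

variable {n : ℕ} {D : Set ℕ}

theorem intCast_sign_mul_self (ν : PermN n) :
    ((Equiv.Perm.sign ν : ℤ) : ℂ) * ((Equiv.Perm.sign ν : ℤ) : ℂ) = 1 := by
  rw [← Int.cast_mul, ← Units.val_mul, Int.units_mul_self, Units.val_one, Int.cast_one]

theorem leftMulOp_apply_of_mem_PD {ν : PermN n} (hν : ν ∈ Young n D) {w : CS n}
    (hw : w ∈ PD n D) : leftMulOp n ν w = ((Equiv.Perm.sign ν : ℤ) : ℂ) • w := by
  induction hν using Subgroup.closure_induction with
  | mem g hg =>
    obtain ⟨i, hi, hiD, rfl⟩ := hg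
    simp [sign_swapAt, mem_PD_iff.mp hw i hi hiD]
  | one => simp
  | mul x y _ _ hx hy =>
    rw [leftMulOp_mul, Module.End.mul_apply, hy, map_smul, hx, smul_smul, map_mul, Units.val_mul,
      Int.cast_mul, mul_comm]
  | inv x _ hx =>
    have := congrArg (leftMulOp n x⁻¹) hx
    rw [← Module.End.mul_apply, ← leftMulOp_mul, inv_mul_cancel, leftMulOp_one,
      Module.End.one_apply, map_smul] at this
    rw [Equiv.Perm.sign_inv]
    calc leftMulOp n x⁻¹ w
        = (((Equiv.Perm.sign x : ℤ) : ℂ) * ((Equiv.Perm.sign x : ℤ) : ℂ)) • leftMulOp n x⁻¹ w := by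
          rw [intCast_sign_mul_self, one_smul]
      _ = ((Equiv.Perm.sign x : ℤ) : ℂ) • w := by rw [mul_smul, ← this]

def antisymmetrizer (n : ℕ) (D : Set ℕ) : Module.End ℂ (CS n) :=
  ∑ ν : Young n D, ((Equiv.Perm.sign (ν : PermN n) : ℤ) : ℂ) • leftMulOp n ν

theorem antisymmetrizer_single (μ : PermN n) (c : ℂ) :
    antisymmetrizer n D (Finsupp.single μ c) =
      ∑ ν : Young n D, ((Equiv.Perm.sign (ν : PermN n) : ℤ) : ℂ) • Finsupp.single (ν * μ) c := by
  simp [antisymmetrizer]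

theorem antisymmetrizer_commute_rightMulOp (ρ : PermN n) :
    Commute (antisymmetrizer n D) (rightMulOp n ρ) :=
  Commute.sum_left _ _ _ fun ν _ => (leftMulOp_commute_rightMulOp ν ρ).smul_left _

theorem vPerm_eq_antisymmetrizer (σ : PermN n) :
    vPerm n σ = antisymmetrizer n (Des n σ⁻¹) (Finsupp.single σ 1) := by
  have hvD : vD n (Des n σ⁻¹) = antisymmetrizer n (Des n σ⁻¹) (Finsupp.single 1 1) := by
    rw [vD, antisymmetrizer_single, ← finsum_subtype_eq_finsum_cond, finsum_eq_sum_of_fintype]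
    simp
  rw [vPerm, hvD, ← Module.End.mul_apply, ← (antisymmetrizer_commute_rightMulOp σ).eq,
    Module.End.mul_apply, rightMulOp_single, one_mul]

theorem leftMulOp_antisymmetrizer {t : PermN n} (ht : t ∈ Young n D) (x : CS n) :
    leftMulOp n t (antisymmetrizer n D x) =
      ((Equiv.Perm.sign t : ℤ) : ℂ) • antisymmetrizer n D x := by
  simp only [antisymmetrizer, LinearMap.sum_apply, LinearMap.smul_apply, map_sum, map_smul,
    Finset.smul_sum, smul_smul]
  refine Fintype.sum_equiv (Equiv.mulLeft ⟨t, ht⟩) _ _ fun ν => ?_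
  rw [Equiv.coe_mulLeft, Subgroup.coe_mul, leftMulOp_mul, Module.End.mul_apply, map_mul,
    Units.val_mul, Int.cast_mul, ← mul_assoc, intCast_sign_mul_self, one_mul]

theorem antisymmetrizer_mem_PD (x : CS n) : antisymmetrizer n D x ∈ PD n D :=
  mem_PD_iff.mpr fun i hi hiD => by
    rw [leftMulOp_antisymmetrizer (Subgroup.subset_closure ⟨i, hi, hiD, rfl⟩), sign_swapAt]
    simp

theorem antisymmetrizer_apply_of_mem_PD {w : CS n} (hw : w ∈ PD n D) :
    antisymmetrizer n D w = (Fintype.card (Young n D) : ℂ) • w := by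
  simp only [antisymmetrizer, LinearMap.sum_apply, LinearMap.smul_apply,
    leftMulOp_apply_of_mem_PD (SetLike.coe_mem _) hw, smul_smul, intCast_sign_mul_self, one_smul,
    Finset.sum_const, Finset.card_univ, Nat.cast_smul_eq_nsmul]

theorem exists_mem_HS_apply_vPerm_eq (σ : PermN n) {w : CS n} (hw : w ∈ PD n (Des n σ⁻¹)) :
    ∃ h ∈ HS n, h (vPerm n σ) = w := by
  refine ⟨(Fintype.card (Young n (Des n σ⁻¹)) : ℂ)⁻¹ •
    ∑ τ, w τ • rightMulOp n (σ⁻¹ * τ), ?_, ?_⟩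
  · exact Subalgebra.smul_mem _ (Subalgebra.sum_mem _ fun τ _ =>
      Subalgebra.smul_mem _ (rightMulOp_mem_HS _) _) _
  · have hcomm : ∀ τ, rightMulOp n (σ⁻¹ * τ) (vPerm n σ) =
        antisymmetrizer n (Des n σ⁻¹) (Finsupp.single τ 1) := fun τ => by
      rw [vPerm_eq_antisymmetrizer, ← Module.End.mul_apply,
        ← (antisymmetrizer_commute_rightMulOp _).eq, Module.End.mul_apply, rightMulOp_single,
        mul_inv_cancel_left]
    have hw_sum : ∑ τ, w τ • Finsupp.single τ (1 : ℂ) = w := by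
      simp_rw [Finsupp.smul_single_one, Finsupp.univ_sum_single]
    simp only [LinearMap.smul_apply, LinearMap.sum_apply, hcomm, ← map_smul, ← map_sum, hw_sum,
      antisymmetrizer_apply_of_mem_PD hw]
    rw [smul_smul, inv_mul_cancel₀ (by simp), one_smul]

end Antisymmetrizer

section Spanning

variable {n : ℕ}

theorem lt_of_val_eq_succ_of_notMem_Des {μ : PermN n} {a b : Fin n} (hb : (b : ℕ) = a + 1)
    (ha : (a : ℕ) ∉ Des n μ) : μ a < μ b := by
  have hab : a ≠ b := by simp [Fin.ext_iff, hb]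
  have hle : μ a ≤ μ b := by
    rw [mem_Des_iff (hb ▸ b.2), not_lt] at ha
    simpa [← hb] using ha
  exact hle.lt_of_ne (μ.injective.ne hab)

theorem lt_of_forall_notMem_Des {μ : PermN n} {a b : Fin n} (hab : a < b)
    (h : ∀ j : ℕ, (a : ℕ) ≤ j → j < b → j ∉ Des n μ) : μ a < μ b := by
  obtain ⟨k, hk⟩ : ∃ k, (b : ℕ) = a + k + 1 := ⟨b - a - 1, by omega⟩
  induction k generalizing b with
  | zero => exact lt_of_val_eq_succ_of_notMem_Des hk (h a le_rfl (by omega))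
  | succ k ih =>
    let c : Fin n := ⟨a + k + 1, by omega⟩
    have hac : μ a < μ c :=
      ih (Fin.lt_def.mpr (by simp [c])) (fun j hj hjc => h j hj (by simp [c] at hjc; omega)) rfl
    exact hac.trans (lt_of_val_eq_succ_of_notMem_Des (by simp [c]; omega)
      (h c (by simp only [c]; omega) (by simp only [c]; omega)))

theorem val_le_iff_of_mem_Young {D : Set ℕ} {ν : PermN n} (hν : ν ∈ Young n D) {j : ℕ}
    (hj : j ∈ D) (a : Fin n) : (ν a : ℕ) ≤ j ↔ (a : ℕ) ≤ j := by
  induction hν using Subgroup.closure_induction generalizing a with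
  | mem g hg =>
    obtain ⟨i, hi, hiD, rfl⟩ := hg
    have hij : i ≠ j := by rintro rfl; exact hiD hj
    simp only [swapAt, Equiv.swap_apply_def]
    split_ifs <;> simp_all [Fin.ext_iff] <;> omega
  | one => rfl
  | mul x y _ _ hx hy => exact (hx (y a)).trans (hy a)
  | inv x _ hx => simpa using (hx (x⁻¹ a)).symm

theorem lt_of_mem_Young {D : Set ℕ} {ν : PermN n} (hν : ν ∈ Young n D) {j : ℕ} (hj : j ∈ D)
    {a b : Fin n} (ha : (a : ℕ) ≤ j) (hb : j < b) : ν a < ν b := by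
  have h₁ := (val_le_iff_of_mem_Young hν hj a).mpr ha
  have h₂ := (val_le_iff_of_mem_Young hν hj b).not.mpr (by omega)
  rw [Fin.lt_def]
  omega

theorem exists_lt_and_lt_of_ne_one {ν : PermN n} (hν : ν ≠ 1) : ∃ a b, a < b ∧ ν b < ν a := by
  by_contra! h
  have hmono : StrictMono ν := fun a b hab => (h a b hab).lt_of_ne (ν.injective.ne hab.ne)
  exact hν (Equiv.ext fun a => Fin.ext (Fin.coe_orderIso_apply
    (hmono.orderIsoOfSurjective ν ν.surjective) a))

def inversions (ρ : PermN n) : Finset (Fin n × Fin n) :=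
  Finset.univ.filter fun pq => pq.1 < pq.2 ∧ ρ pq.2 < ρ pq.1

@[simp]
theorem mem_inversions {ρ : PermN n} {pq : Fin n × Fin n} :
    pq ∈ inversions ρ ↔ pq.1 < pq.2 ∧ ρ pq.2 < ρ pq.1 := by
  simp [inversions]

theorem inversions_ssubset_inversions_mul {μ ν : PermN n} (hν : ν ∈ Young n (Des n μ⁻¹))
    (hν₁ : ν ≠ 1) : inversions μ ⊂ inversions (ν * μ) := by
  refine Finset.ssubset_iff_of_subset (fun pq hpq => ?_) |>.mpr ?_
  · rw [mem_inversions] at hpq ⊢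
    obtain ⟨hlt, hinv⟩ := hpq
    refine ⟨hlt, ?_⟩
    obtain ⟨j, hjD, hj₁, hj₂⟩ : ∃ j ∈ Des n μ⁻¹, (μ pq.2 : ℕ) ≤ j ∧ j < μ pq.1 := by
      by_contra! hcon
      have := lt_of_forall_notMem_Des (μ := μ⁻¹) hinv fun j h₁ h₂ hj =>
        absurd h₂ (not_lt.mpr (hcon j hj h₁))
      simp only [Equiv.Perm.coe_inv, Equiv.symm_apply_apply] at this
      exact lt_asymm hlt this
    exact lt_of_mem_Young hν hjD hj₁ hj₂
  · obtain ⟨a, b, hab, hba⟩ := exists_lt_and_lt_of_ne_one hν₁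
    have hμ : μ⁻¹ a < μ⁻¹ b := lt_of_forall_notMem_Des hab fun j h₁ h₂ hj =>
      lt_asymm hba (lt_of_mem_Young hν hj h₁ h₂)
    refine ⟨(μ⁻¹ a, μ⁻¹ b), ?_, ?_⟩ <;>
      simp only [mem_inversions, Equiv.Perm.mul_apply, Equiv.Perm.coe_inv, Equiv.apply_symm_apply]
    · exact ⟨hμ, hba⟩
    · exact fun h => lt_asymm hab h.2

theorem single_mem_span_vPerm (μ : PermN n) :
    Finsupp.single μ 1 ∈ Submodule.span ℂ (Set.range (vPerm n)) := by
  induction μ using (measure fun μ : PermN n =>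
    Fintype.card (Fin n × Fin n) - (inversions μ).card).wf.induction with
  | h μ ih =>
    have hv := vPerm_eq_antisymmetrizer μ
    rw [antisymmetrizer_single, Fintype.sum_eq_add_sum_compl 1] at hv
    simp only [OneMemClass.coe_one, Equiv.Perm.sign_one, Units.val_one, Int.cast_one, one_mul,
      one_smul] at hv
    rw [eq_sub_of_add_eq hv.symm]
    refine sub_mem (Submodule.subset_span ⟨μ, rfl⟩) (sum_mem fun ν hν => Submodule.smul_mem _ _ ?_)
    refine ih _ ?_
    have hlt := Finset.card_lt_card
      (inversions_ssubset_inversions_mul ν.2 (by simpa using hν : (ν : PermN n) ≠ 1))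
    have hle := Finset.card_le_univ (inversions ((ν : PermN n) * μ))
    change Fintype.card (Fin n × Fin n) - _ < Fintype.card (Fin n × Fin n) - _
    omega

theorem span_range_vPerm : Submodule.span ℂ (Set.range (vPerm n)) = ⊤ :=
  eq_top_iff.mpr <| (Finsupp.basisSingleOne.span_eq).ge.trans <| Submodule.span_le.mpr <|
    Set.range_subset_iff.mpr fun μ => by simpa using single_mem_span_vPerm μ

theorem apply_mem_span_singleton_vPerm {q : Module.End ℂ (CS n)} {σ : PermN n}
    (hq : ∀ τ, q (vPerm n τ) = if τ = σ then vPerm n τ else 0) (x : CS n) :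
    q x ∈ ℂ ∙ vPerm n σ := by
  have : Submodule.span ℂ (Set.range (vPerm n)) ≤ (ℂ ∙ vPerm n σ).comap q :=
    Submodule.span_le.mpr <| Set.range_subset_iff.mpr fun τ => by
      by_cases h : τ = σ <;> simp [hq, h, Submodule.mem_span_singleton_self]
  exact this (span_range_vPerm ▸ Submodule.mem_top)

end Spanning

theorem pIdeal_iso_PD_general (n : ℕ)
    (p : PermN n → Module.End ℂ (CS n))
    (hp : ∀ σ τ : PermN n, p σ (vPerm n τ) = if τ = σ then vPerm n τ else 0)
    (σ : PermN n) :
    ∃ e : ↥(pIdeal n (p σ)) ≃ₗ[ℂ] ↥(PD n (Des n σ⁻¹)),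
      ∀ h : Module.End ℂ (CS n), h ∈ HS n →
        ∀ x y : ↥(pIdeal n (p σ)),
          (y : Module.End ℂ (CS n)) = h * (x : Module.End ℂ (CS n)) →
          (e y : CS n) = h (e x : CS n) := by
  obtain ⟨e, he⟩ := exists_linearEquiv_map_mulRight (HS n) (PD n (Des n σ⁻¹))
    (by simpa using hp σ σ) (apply_mem_span_singleton_vPerm (hp σ))
    (fun _ hh => apply_mem_PD_of_mem_HS hh (vPerm_eq_antisymmetrizer σ ▸ antisymmetrizer_mem_PD _))
    (fun _ hw => exists_mem_HS_apply_vPerm_eq σ hw)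
  refine ⟨e, fun h _ x y hxy => (he y).trans ?_⟩
  rw [hxy, Module.End.mul_apply]
  exact congrArg h (he x).symm

/-- For every `σ`, the right ideal `p_σ · H𝔖ₙ` is isomorphic to
`P_{Des(σ⁻¹)}` as a right `H𝔖ₙ`-module; an isomorphism of right `H𝔖ₙ`-modules is a
`ℂ`-linear isomorphism commuting with the (left-to-right) action of every `h ∈ H𝔖ₙ`. -/
theorem pIdeal_iso_PD (n : ℕ) (hn : 1 ≤ n)
    (p : PermN n → Module.End ℂ (CS n))
    (hp : ∀ σ τ : PermN n, p σ (vPerm n τ) = if τ = σ then vPerm n τ else 0)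
    (σ : PermN n) :
    ∃ e : ↥(pIdeal n (p σ)) ≃ₗ[ℂ] ↥(PD n (Des n σ⁻¹)),
      ∀ h : Module.End ℂ (CS n), h ∈ HS n →
        ∀ x y : ↥(pIdeal n (p σ)),
          (y : Module.End ℂ (CS n)) = h * (x : Module.End ℂ (CS n)) →
          (e y : CS n) = h (e x : CS n) :=
  pIdeal_iso_PD_general n p hp σ

end
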